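/- For every 1 ≤ k ≤ n there exists a constant C(n,k) > 0, depending only on n and k, such that for every λ = (λ_1,…,λ_n) ∈ Γ_k with λ_1 ≥ λ_2 ≥ ⋯ ≥ λ_n one has λ_1 σ_{k−1}(λ|1) ≥ C(n,k) σ_k(λ). -/

import Mathlib

open Finset

/-- `esymmOn S m lam` is the m-th elementary symmetric polynomial of the
components of `lam` with indices in `S` (zero for `m < 0`, and automatically
zero for `m > |S|`). For `S = {i}ᶜ` this is `σ_m(λ|i)`, etc. -/
noncomputable def esymmOn {n : ℕ} (S : Finset (Fin n)) (m : ℤ) (lam : Fin n → ℝ) : ℝ :=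
  if m < 0 then 0 else ∑ s ∈ S.powersetCard m.toNat, ∏ i ∈ s, lam i

/-- `σ_m(λ)` for the full vector. -/
noncomputable def esymm {n : ℕ} (m : ℤ) (lam : Fin n → ℝ) : ℝ :=
  esymmOn Finset.univ m lam

/-- Garding's cone `Γ_k`. -/
def GammaCone {n : ℕ} (k : ℕ) (lam : Fin n → ℝ) : Prop :=
  ∀ j : ℕ, 1 ≤ j → j ≤ k → 0 < esymm (j : ℤ) lam

/-!
Write `λ = (a, s)` with `a = λ₁` the largest entry, so that `σₖ(λ) = a σₖ₋₁(s) + σₖ(s)`; it suffices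
to show `σₖ(s) ≤ (n - 1) a σₖ₋₁(s)`, and then `C = 1/n` works.

Newton's inequalities `σⱼσⱼ₊₂ ≤ σⱼ₊₁²` hold for every real vector, since `∏ (t + λᵢ)` is
real-rooted; they make the ratios `σⱼ₊₁/σⱼ` decrease as long as the `σⱼ` are positive. The key
structural fact is that deleting an entry of a point of `Γₖ` gives a point of `Γₖ₋₁`. Then either
`σₖ(s) ≤ 0`, or `s ∈ Γₖ` and `σₖ(s) ≤ σ₁(s) σₖ₋₁(s) ≤ (n - 1) a σₖ₋₁(s)`.
-/

theorem Nat.choose_mul_choose_add_two_le_sq (n k : ℕ) :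
    n.choose k * n.choose (k + 2) ≤ n.choose (k + 1) ^ 2 := by
  have h1 := Nat.choose_succ_right_eq n k
  have h2 := Nat.choose_succ_right_eq n (k + 1)
  have key : n.choose k * n.choose (k + 2) * ((k + 1) * (k + 2)) ≤
      n.choose (k + 1) ^ 2 * ((k + 1) * (k + 2)) :=
    calc n.choose k * n.choose (k + 2) * ((k + 1) * (k + 2))
        = n.choose k * n.choose (k + 1) * ((k + 1) * (n - (k + 1))) := by
          rw [show n.choose k * n.choose (k + 2) * ((k + 1) * (k + 2)) =
            n.choose (k + 2) * (k + 2) * (n.choose k * (k + 1)) by ring, h2]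
          ring
      _ ≤ n.choose k * n.choose (k + 1) * ((k + 2) * (n - k)) := by
          gcongr <;> omega
      _ = n.choose (k + 1) ^ 2 * ((k + 1) * (k + 2)) := by
          rw [show n.choose (k + 1) ^ 2 * ((k + 1) * (k + 2)) =
            n.choose (k + 1) * (k + 1) * (n.choose (k + 1) * (k + 2)) by ring, h1]
          ring
  exact Nat.le_of_mul_le_mul_right key (by positivity)

theorem mul_le_mul_of_mul_le_sq {x : ℕ → ℝ} {n : ℕ} (hpos : ∀ j ≤ n, 0 < x j)
    (hsq : ∀ j, x j * x (j + 2) ≤ x (j + 1) ^ 2) {i j : ℕ} (hij : i ≤ j) (hjn : j < n) :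
    x (j + 1) * x i ≤ x (i + 1) * x j := by
  induction j, hij using Nat.le_induction with
  | base => rw [mul_comm]
  | succ j hij ih =>
    have hj1 := hpos (j + 1) (by omega)
    have hj2 := hpos (j + 2) (by omega)
    have hi1 := hpos (i + 1) (by omega)
    refine le_of_mul_le_mul_right ?_ hj1
    calc x (j + 2) * x i * x (j + 1) = x (j + 2) * (x (j + 1) * x i) := by ring
      _ ≤ x (j + 2) * (x (i + 1) * x j) := mul_le_mul_of_nonneg_left (ih (by omega)) hj2.le
      _ = x (i + 1) * (x j * x (j + 2)) := by ring
      _ ≤ x (i + 1) * x (j + 1) ^ 2 := by gcongr; exact hsq j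
      _ = x (i + 1) * x (j + 1) * x (j + 1) := by ring

open Polynomial

namespace Multiset

section CommSemiring

variable {R : Type*} [CommSemiring R]

theorem esymm_zero (s : Multiset R) : s.esymm 0 = 1 := by
  simp [esymm]

theorem esymm_one (s : Multiset R) : s.esymm 1 = s.sum := by
  simp [esymm, powersetCard_one]

theorem esymm_cons_succ (a : R) (s : Multiset R) (j : ℕ) :
    (a ::ₘ s).esymm (j + 1) = a * s.esymm j + s.esymm (j + 1) := by
  simp only [esymm, powersetCard_cons, map_add, sum_add, map_map, Function.comp_def, prod_cons,
    sum_map_mul_left]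
  ring

theorem esymm_eq_zero_of_card_lt {s : Multiset R} {j : ℕ} (h : card s < j) : s.esymm j = 0 := by
  simp [esymm, powersetCard_eq_empty _ h]

theorem esymm_card (s : Multiset R) : s.esymm (card s) = s.prod := by
  induction s using Multiset.induction_on with
  | empty => simp [esymm_zero]
  | cons a s ih =>
    rw [card_cons, esymm_cons_succ, ih, esymm_eq_zero_of_card_lt (Nat.lt_succ_self _), prod_cons,
      add_zero]

end CommSemiring

theorem esymm_map_inv_mul_prod {K : Type*} [Field K] (s : Multiset K) (hs : ∀ x ∈ s, x ≠ 0)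
    {j l : ℕ} (h : j + l = card s) : (s.map (·⁻¹)).esymm j * s.prod = s.esymm l := by
  induction s using Multiset.induction_on generalizing j l with
  | empty =>
    obtain ⟨rfl, rfl⟩ : j = 0 ∧ l = 0 := by simpa using h
    simp [esymm_zero]
  | cons a s ih =>
    have ha : a ≠ 0 := hs a (mem_cons_self a s)
    have ih' : ∀ {j l : ℕ}, j + l = card s → _ := ih fun x hx => hs x (mem_cons_of_mem hx)
    rw [card_cons] at h
    rcases j with _ | j
    · rw [esymm_zero, one_mul, ← show card (a ::ₘ s) = l by simp; omega, esymm_card]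
    rw [map_cons, esymm_cons_succ, prod_cons]
    rcases l with _ | l
    · rw [esymm_eq_zero_of_card_lt (s := s.map (·⁻¹)) (j := j + 1) (by simp; omega), esymm_zero,
        add_zero, ← esymm_zero s, ← ih' (by omega : j + 0 = card s)]
      field_simp
    · rw [esymm_cons_succ, ← ih' (by omega : j + (l + 1) = card s),
        ← ih' (by omega : (j + 1) + l = card s)]
      field_simp
      ring

theorem exists_derivative_prod_X_add_C (s : Multiset ℝ) :
    ∃ t : Multiset ℝ, card t = card s - 1 ∧
      derivative (s.map (X + C ·)).prod = C (card s : ℝ) * (t.map (X + C ·)).prod := by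
  rcases eq_or_ne s 0 with rfl | hs
  · exact ⟨0, by simp⟩
  have hm : 1 ≤ card s := card_pos.mpr hs
  set P : ℝ[X] := (s.map (X + C ·)).prod
  have hP : P = ((s.map Neg.neg).map (X - C ·)).prod := by
    simp only [P, map_map, Function.comp_def, map_neg, sub_neg_eq_add]
  have hPdeg : P.natDegree = card s := by
    rw [hP, natDegree_multiset_prod_X_sub_C_eq_card, card_map]
  have hProots : card P.roots = card s := by
    rw [hP, roots_multiset_prod_X_sub_C, card_map]
  have hroots : card (derivative P).roots = card s - 1 := by
    have := card_roots_le_derivative P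
    have := card_roots' (derivative P)
    have := natDegree_derivative_le P
    omega
  have hdeg : (derivative P).natDegree = card s - 1 := by
    have := card_roots' (derivative P)
    have := natDegree_derivative_le P
    omega
  have hlead : (derivative P).leadingCoeff = card s := by
    have hmonic : P.Monic := by
      rw [hP]; exact monic_multiset_prod_of_monic _ _ fun r _ => monic_X_sub_C r
    rw [leadingCoeff, hdeg, coeff_derivative, Nat.sub_add_cancel hm, ← hPdeg,
      hmonic.coeff_natDegree, hPdeg, Nat.cast_sub hm]
    ring
  refine ⟨(derivative P).roots.map Neg.neg, by simpa using hroots, ?_⟩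
  rw [← hlead]
  conv_lhs => rw [← C_leadingCoeff_mul_prod_multiset_X_sub_C (hroots.trans hdeg.symm)]
  simp only [map_map, Function.comp_def, map_neg, sub_eq_add_neg]

noncomputable def esymmMean (s : Multiset ℝ) (i : ℕ) : ℝ :=
  s.esymm i / (card s).choose i

theorem esymmMean_eq_zero_of_card_lt {s : Multiset ℝ} {j : ℕ} (h : card s < j) :
    s.esymmMean j = 0 := by
  rw [esymmMean, esymm_eq_zero_of_card_lt h, zero_div]

theorem esymm_eq_choose_mul_esymmMean (s : Multiset ℝ) (i : ℕ) :
    s.esymm i = (card s).choose i * s.esymmMean i := by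
  rcases le_or_gt i (card s) with hi | hi
  · have : ((card s).choose i : ℝ) ≠ 0 := by exact_mod_cast (Nat.choose_pos hi).ne'
    rw [esymmMean, mul_div_cancel₀ _ this]
  · rw [esymm_eq_zero_of_card_lt hi, esymmMean_eq_zero_of_card_lt hi, mul_zero]

/-- The roots of the derivative of `∏ (X + xᵢ)`, negated, have the same means as `s`. -/
theorem exists_card_pred_esymmMean_eq (s : Multiset ℝ) :
    ∃ t : Multiset ℝ, card t = card s - 1 ∧ ∀ i < card s, t.esymmMean i = s.esymmMean i := by
  obtain ⟨t, ht, hd⟩ := exists_derivative_prod_X_add_C s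
  refine ⟨t, ht, fun i hi => ?_⟩
  set m := card s
  have hcoeff := congrArg (coeff · (m - 1 - i)) hd
  simp only [coeff_derivative, coeff_C_mul] at hcoeff
  rw [prod_X_add_C_coeff s (by omega), prod_X_add_C_coeff t (by omega),
    show m - (m - 1 - i + 1) = i by omega, show card t - (m - 1 - i) = i by omega] at hcoeff
  have hchoose : ((m - 1).choose i : ℝ) * m = m.choose i * ((m - i : ℕ) : ℝ) := by
    have := Nat.choose_mul_succ_eq (m - 1) i
    rw [Nat.sub_add_cancel (by omega : 1 ≤ m)] at this
    exact_mod_cast this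
  have hmi : ((m - 1 - i : ℕ) : ℝ) + 1 = ((m - i : ℕ) : ℝ) := by
    rw [← Nat.cast_add_one]; congr 1; omega
  have hc : (0 : ℝ) < (m - 1).choose i := by exact_mod_cast Nat.choose_pos (by omega)
  have hc' : (0 : ℝ) < m.choose i := by exact_mod_cast Nat.choose_pos hi.le
  rw [hmi] at hcoeff
  rw [esymmMean, esymmMean, ht, div_eq_div_iff hc.ne' hc'.ne']
  apply mul_left_cancel₀ (show (m : ℝ) ≠ 0 by exact_mod_cast (by omega : m ≠ 0))
  linear_combination (m.choose i : ℝ) * hcoeff.symm - s.esymm i * hchoose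

theorem esymmMean_map_inv_mul_prod (s : Multiset ℝ) (hs : ∀ x ∈ s, x ≠ 0) {j l : ℕ}
    (h : j + l = card s) : (s.map (·⁻¹)).esymmMean j * s.prod = s.esymmMean l := by
  rw [esymmMean, esymmMean, card_map, div_mul_eq_mul_div, esymm_map_inv_mul_prod s hs h, ← h,
    Nat.choose_symm_add]

/-- Newton's inequality. Passing to the roots of the derivative lowers `card s` and keeps the
means; inverting the entries turns the top case `i + 2 = card s` into `i = 0`; for two entries it
is AM-GM. -/
theorem esymmMean_mul_le_sq (s : Multiset ℝ) (i : ℕ) :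
    s.esymmMean i * s.esymmMean (i + 2) ≤ s.esymmMean (i + 1) ^ 2 := by
  obtain ⟨m, hm⟩ : ∃ m, card s = m := ⟨_, rfl⟩
  induction m generalizing s i with
  | zero =>
    rw [esymmMean_eq_zero_of_card_lt (j := i + 2) (by omega), mul_zero]
    positivity
  | succ m ih =>
    have reduce : ∀ t i, card t = m + 1 → i + 2 < m + 1 →
        t.esymmMean i * t.esymmMean (i + 2) ≤ t.esymmMean (i + 1) ^ 2 := by
      intro t i ht hi
      obtain ⟨u, hu, hE⟩ := exists_card_pred_esymmMean_eq t
      rw [← hE i (by omega), ← hE (i + 1) (by omega), ← hE (i + 2) (by omega)]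
      exact ih u i (by omega)
    rcases lt_trichotomy (i + 2) (m + 1) with hi | hi | hi
    · exact reduce s i hm hi
    · rcases i with _ | i
      · obtain ⟨x, y, rfl⟩ := card_eq_two.mp (by omega : card s = 2)
        simp only [esymmMean, insert_eq_cons, esymm_zero, card_cons, card_singleton,
          Nat.reduceAdd, Nat.choose_zero_right, Nat.cast_one, ne_eq, one_ne_zero,
          not_false_eq_true, div_self, zero_add, esymm_pair_two, Nat.choose_self, div_one, one_mul,
          esymm_pair_one, Nat.choose_succ_self_right, Nat.cast_ofNat]
        nlinarith [sq_nonneg (x - y)]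
      by_cases hs : ∀ x ∈ s, x ≠ 0
      · have hinv := reduce (s.map (·⁻¹)) 0 (by simpa using hm) (by omega)
        rw [← esymmMean_map_inv_mul_prod s hs (by omega : 2 + (i + 1) = card s),
          ← esymmMean_map_inv_mul_prod s hs (by omega : 0 + (i + 1 + 2) = card s),
          ← esymmMean_map_inv_mul_prod s hs (by omega : 1 + (i + 1 + 1) = card s)]
        calc _ = ((s.map (·⁻¹)).esymmMean 0 * (s.map (·⁻¹)).esymmMean 2) * s.prod ^ 2 := by ring
          _ ≤ (s.map (·⁻¹)).esymmMean 1 ^ 2 * s.prod ^ 2 := by gcongr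
          _ = _ := by ring
      · push Not at hs
        obtain ⟨x, hx, rfl⟩ := hs
        rw [esymmMean.eq_def s (i + 1 + 2), show i + 1 + 2 = card s by omega, esymm_card,
          prod_eq_zero hx, zero_div, mul_zero]
        positivity
    · rw [esymmMean_eq_zero_of_card_lt (j := i + 2) (by omega), mul_zero]
      positivity

theorem esymm_mul_le_sq (s : Multiset ℝ) (i : ℕ) :
    s.esymm i * s.esymm (i + 2) ≤ s.esymm (i + 1) ^ 2 := by
  have hc : ((card s).choose i * (card s).choose (i + 2) : ℝ) ≤ ((card s).choose (i + 1)) ^ 2 := by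
    exact_mod_cast Nat.choose_mul_choose_add_two_le_sq _ _
  simp only [esymm_eq_choose_mul_esymmMean s]
  calc _ = ((card s).choose i * (card s).choose (i + 2) : ℝ) *
        (s.esymmMean i * s.esymmMean (i + 2)) := by ring
    _ ≤ ((card s).choose i * (card s).choose (i + 2) : ℝ) * s.esymmMean (i + 1) ^ 2 := by
        gcongr
        exact esymmMean_mul_le_sq s i
    _ ≤ ((card s).choose (i + 1)) ^ 2 * s.esymmMean (i + 1) ^ 2 := by gcongr
    _ = _ := by ring

def InGardingCone (k : ℕ) (s : Multiset ℝ) : Prop :=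
  ∀ j ≤ k, 0 < s.esymm j

theorem InGardingCone.mono {k l : ℕ} {s : Multiset ℝ} (h : InGardingCone k s) (hlk : l ≤ k) :
    InGardingCone l s :=
  fun j hj => h j (hj.trans hlk)

theorem InGardingCone.succ {k : ℕ} {s : Multiset ℝ} (h : InGardingCone k s)
    (hk : 0 < s.esymm (k + 1)) : InGardingCone (k + 1) s :=
  fun j hj => (Nat.lt_or_eq_of_le hj).elim (fun hj => h j (Nat.lt_succ_iff.mp hj)) (· ▸ hk)

theorem esymm_pos_of_forall_pos {s : Multiset ℝ} (hs : ∀ x ∈ s, 0 < x) {j : ℕ}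
    (hj : j ≤ card s) : 0 < s.esymm j := by
  induction s using Multiset.induction_on generalizing j with
  | empty => simp_all [esymm_zero]
  | cons a s ih =>
    have ih' : ∀ {j}, j ≤ card s → 0 < s.esymm j := ih fun x hx => hs x (mem_cons_of_mem hx)
    rcases j with _ | j
    · simp [esymm_zero]
    rw [esymm_cons_succ]
    have hnext : 0 ≤ s.esymm (j + 1) := by
      rcases le_or_gt (j + 1) (card s) with h | h
      · exact (ih' h).le
      · exact (esymm_eq_zero_of_card_lt h).ge
    have := ih' (by simpa using hj)
    have := hs a (mem_cons_self a s)
    positivity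

theorem esymm_cons_le_of_nonpos {c : ℝ} (hc : c ≤ 0) {s : Multiset ℝ} {k : ℕ}
    (h : ∀ j ≤ k, 0 ≤ (c ::ₘ s).esymm j) : ∀ j ≤ k, (c ::ₘ s).esymm j ≤ s.esymm j := by
  intro j hj
  induction j with
  | zero => simp [esymm_zero]
  | succ j ih =>
    rw [esymm_cons_succ]
    have := (h j (by omega)).trans (ih (by omega))
    nlinarith

/-- The ratios `eⱼ₊₁(s) / eⱼ(s)` decrease on the cone by Newton's inequality, so
`c eⱼ(s) + eⱼ₊₁(s) ≤ 0` persists as `j` grows. -/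
theorem esymm_cons_nonpos_of_le {c : ℝ} {s : Multiset ℝ} {i k : ℕ}
    (hs : InGardingCone (k + 1) s) (hik : i ≤ k) (hi : (c ::ₘ s).esymm (i + 1) ≤ 0) :
    (c ::ₘ s).esymm (k + 1) ≤ 0 := by
  rw [esymm_cons_succ] at hi ⊢
  have hratio :=
    mul_le_mul_of_mul_le_sq (x := s.esymm) hs s.esymm_mul_le_sq hik (Nat.lt_succ_self k)
  have hsi := hs i (by omega)
  have hsk := hs k k.le_succ
  refine nonpos_of_mul_nonpos_right ?_ hsi
  nlinarith

theorem inGardingCone_of_nonneg {k : ℕ} {s : Multiset ℝ} (hnn : ∀ j < k, 0 ≤ s.esymm j)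
    (hk : 0 < s.esymm k) : InGardingCone k s := by
  induction s using Multiset.strongInductionOn with
  | ih s ih =>
  have hks : k ≤ card s := by
    by_contra h
    exact hk.ne' (esymm_eq_zero_of_card_lt (not_le.mp h))
  by_cases hpos : ∀ x ∈ s, 0 < x
  · exact fun j hj => esymm_pos_of_forall_pos hpos (hj.trans hks)
  push Not at hpos
  obtain ⟨c, hc, hc0⟩ := hpos
  obtain ⟨t, rfl⟩ := exists_cons_of_mem hc
  have hle := esymm_cons_le_of_nonpos hc0 fun j hj =>
    (Nat.lt_or_eq_of_le hj).elim (hnn j) fun h => h ▸ hk.le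
  have ht : InGardingCone k t := ih t (lt_cons_self t c)
    (fun j hj => (hnn j hj).trans (hle j hj.le)) (hk.trans_le (hle k le_rfl))
  rintro (_ | i) hi
  · simp [esymm_zero]
  by_contra hneg
  obtain ⟨k, rfl⟩ : ∃ l, k = l + 1 := ⟨k - 1, by omega⟩
  exact (esymm_cons_nonpos_of_le ht (by omega) (not_lt.mp hneg)).not_gt hk

theorem InGardingCone.of_cons {k : ℕ} {a : ℝ} {s : Multiset ℝ}
    (h : InGardingCone (k + 1) (a ::ₘ s)) : InGardingCone k s := by
  induction k with
  | zero => simp [InGardingCone, esymm_zero]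
  | succ k ih =>
  have hs := ih (h.mono k.succ.le_succ)
  refine hs.succ (not_le.mp fun hneg => ?_)
  -- `b` is the least value with `eⱼ(b ::ₘ s) ≥ 0` for all `j ≤ k + 1`, so one of these vanishes;
  -- but `b ≤ a` and `eₖ₊₁(s) ≤ 0` keep `eₖ₊₂(b ::ₘ s)` positive, against `inGardingCone_of_nonneg`.
  obtain ⟨i₀, hi₀, hmax⟩ := Finset.exists_max_image (Finset.range (k + 1))
    (fun j => -s.esymm (j + 1) / s.esymm j) Finset.nonempty_range_add_one
  have hi₀k : i₀ ≤ k := Finset.mem_range_succ_iff.mp hi₀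
  have hsi₀ := hs i₀ (by omega)
  set b := -s.esymm (i₀ + 1) / s.esymm i₀
  have hb : ∀ j ≤ k, 0 ≤ (b ::ₘ s).esymm (j + 1) := by
    intro j hj
    have := hmax j (Finset.mem_range_succ_iff.mpr hj)
    rw [div_le_iff₀ (hs j (by omega))] at this
    rw [esymm_cons_succ]
    linarith
  have hb₀ : (b ::ₘ s).esymm (i₀ + 1) = 0 := by
    rw [esymm_cons_succ, div_mul_cancel₀ _ hsi₀.ne']
    ring
  have hba : b ≤ a := by
    have := h (i₀ + 1) (by omega)
    rw [esymm_cons_succ] at this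
    rw [div_le_iff₀ hsi₀]
    linarith
  have hcone : InGardingCone (k + 2) (b ::ₘ s) := by
    refine inGardingCone_of_nonneg (fun j hj => ?_) ?_
    · rcases j with _ | j
      · simp [esymm_zero]
      · exact hb j (by omega)
    · have := h (k + 2) le_rfl
      rw [esymm_cons_succ] at this ⊢
      nlinarith
  exact (hcone (i₀ + 1) (by omega)).ne' hb₀

theorem esymm_cons_le_card_mul {k : ℕ} {a : ℝ} {s : Multiset ℝ}
    (h : InGardingCone (k + 1) (a ::ₘ s)) (ha : ∀ x ∈ s, x ≤ a) :
    (a ::ₘ s).esymm (k + 1) ≤ card (a ::ₘ s) * (a * s.esymm k) := by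
  have hs : InGardingCone k s := h.of_cons
  have hsk := hs k le_rfl
  have hcard : (0 : ℝ) ≤ card s := by positivity
  have hsum : s.esymm 1 ≤ card s * a := by
    simpa [esymm_one] using sum_le_card_nsmul s a ha
  have ha0 : 0 ≤ a := by
    have := h 1 (by omega)
    rw [← zero_add 1, esymm_cons_succ, esymm_zero] at this
    nlinarith
  have hnext : s.esymm (k + 1) ≤ card s * a * s.esymm k := by
    rcases le_or_gt (s.esymm (k + 1)) 0 with hnp | hp
    · have : 0 ≤ card s * a * s.esymm k := by positivity
      linarith
    · have := mul_le_mul_of_mul_le_sq (x := s.esymm) (hs.succ hp) s.esymm_mul_le_sq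
        (Nat.zero_le k) (Nat.lt_succ_self k)
      rw [esymm_zero, mul_one] at this
      calc s.esymm (k + 1) ≤ s.esymm 1 * s.esymm k := this
        _ ≤ card s * a * s.esymm k := by gcongr
  rw [esymm_cons_succ, card_cons]
  push_cast
  linarith

end Multiset

theorem esymmOn_natCast {n : ℕ} (S : Finset (Fin n)) (j : ℕ) (lam : Fin n → ℝ) :
    esymmOn S j lam = (S.val.map lam).esymm j := by
  rw [esymmOn, if_neg (by omega), Int.toNat_natCast, Finset.esymm_map_val]

theorem Finset.univ_val_map_eq_cons {α β : Type*} [Fintype α] [DecidableEq α] (f : α → β) (i : α) :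
    Finset.univ.val.map f = f i ::ₘ (({i}ᶜ : Finset α).val.map f) := by
  rw [Finset.compl_singleton, Finset.erase_val, ← Multiset.map_cons,
    Multiset.cons_erase (Finset.mem_univ_val i)]

theorem lambda1_sigma_km1_ge {n k : ℕ} (hk1 : 1 ≤ k) (hkn : k ≤ n) :
    ∃ C : ℝ, C > 0 ∧
      ∀ lam : Fin n → ℝ, GammaCone k lam → Antitone lam →
        lam ⟨0, by omega⟩ *
            esymmOn ({(⟨0, by omega⟩ : Fin n)}ᶜ : Finset (Fin n)) ((k : ℤ) - 1) lam
          ≥ C * esymm (k : ℤ) lam := by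
  obtain ⟨j, rfl⟩ : ∃ j, k = j + 1 := ⟨k - 1, by omega⟩
  have hn : (0 : ℝ) < n := by exact_mod_cast (by omega : 0 < n)
  refine ⟨1 / n, by positivity, fun lam hlam hanti => ?_⟩
  have hsplit := Finset.univ_val_map_eq_cons lam ⟨0, by omega⟩
  have hcone : Multiset.InGardingCone (j + 1) (Finset.univ.val.map lam) := by
    rintro (_ | i) hi
    · simp [Multiset.esymm_zero]
    · rw [← esymmOn_natCast]
      exact hlam (i + 1) (by omega) hi
  rw [hsplit] at hcone
  have key := Multiset.esymm_cons_le_card_mul hcone fun x hx => by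
    obtain ⟨i, -, rfl⟩ := Multiset.mem_map.mp hx
    exact hanti (Nat.zero_le i.val)
  rw [← hsplit, Multiset.card_map, Finset.card_val, Finset.card_univ, Fintype.card_fin] at key
  rw [show ((j + 1 : ℕ) : ℤ) - 1 = j by push_cast; ring, esymm, esymmOn_natCast, esymmOn_natCast,
    ge_iff_le, one_div, inv_mul_le_iff₀ hn]
  exact key
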